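/- Let A be a bounded self-adjoint right linear operator on a right quaternionic Hilbert space. Then ‖A‖ = max{|m(A)|, |M(A)|}, where m(A) = inf_{‖φ‖=1} ⟨Aφ, φ⟩ and M(A) = sup_{‖φ‖=1} ⟨Aφ, φ⟩. -/

import Mathlib

noncomputable section

open MulOpposite

abbrev Quat := Quaternion ℝ

class RQH (V : Type*) [NormedAddCommGroup V] [Module Quatᵐᵒᵖ V] where
  inn : V → V → Quat
  conj_symm : ∀ φ ψ : V, star (inn φ ψ) = inn ψ φ
  add_right : ∀ φ ψ ω : V, inn φ (ψ + ω) = inn φ ψ + inn φ ω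
  smul_right : ∀ (φ ψ : V) (q : Quat), inn φ (op q • ψ) = inn φ ψ * q
  norm_sq : ∀ φ : V, inn φ φ = ((‖φ‖ ^ 2 : ℝ) : Quat)

open RQH

variable {V : Type*} [NormedAddCommGroup V] [Module Quatᵐᵒᵖ V] [CompleteSpace V] [RQH V]

def IsBddRL (A : V → V) : Prop :=
  (∀ x y : V, A (x + y) = A x + A y) ∧
  (∀ (q : Quatᵐᵒᵖ) (x : V), A (q • x) = q • A x) ∧
  (∃ C : ℝ, ∀ x : V, ‖A x‖ ≤ C * ‖x‖)

def IsSA (A : V → V) : Prop := ∀ φ ψ : V, inn (A φ) ψ = inn φ (A ψ)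

def IsPos (A : V → V) : Prop := ∀ φ : V, ∃ r : ℝ, 0 ≤ r ∧ inn (A φ) φ = (r : Quat)

def opN (A : V → V) : ℝ := sSup { r : ℝ | ∃ φ : V, ‖φ‖ = 1 ∧ r = ‖A φ‖ }

def mA (A : V → V) : ℝ := sInf { r : ℝ | ∃ φ : V, ‖φ‖ = 1 ∧ r = (inn (A φ) φ).re }

def MA (A : V → V) : ℝ := sSup { r : ℝ | ∃ φ : V, ‖φ‖ = 1 ∧ r = (inn (A φ) φ).re }

def Rq (A : V → V) (l : Quat) (ψ : V) : V :=
  A (A ψ) - op ((2 * l.re : ℝ) : Quat) • A ψ + op ((‖l‖ ^ 2 : ℝ) : Quat) • ψ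

def SInv (T : V → V) : Prop :=
  ∃ B : V → V, IsBddRL B ∧ (∀ x, T (B x) = x) ∧ (∀ x, B (T x) = x)

def sspec (A : V → V) : Set Quat := { l | ¬ SInv (Rq A l) }

/-! Over unit vectors the numbers `Re ⟨Aφ, φ⟩` lie in `[m(A), M(A)]`, so they are bounded in
absolute value by `N = max |m(A)| |M(A)|`, and by Cauchy–Schwarz by `‖A‖`; hence `N ≤ ‖A‖`.
Conversely, homogeneity gives `|Re ⟨Az, z⟩| ≤ N ‖z‖²` for all `z`, and polarization for the
self-adjoint `A` with the parallelogram law gives `2 Re ⟨Ax, y⟩ ≤ N (‖x‖² + ‖y‖²)`; taking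
`y = Aφ / ‖Aφ‖` yields `‖Aφ‖ ≤ N`. -/

lemma abs_le_max_abs_csInf_abs_csSup {S : Set ℝ} (hb : BddBelow S) (ha : BddAbove S) {r : ℝ}
    (hr : r ∈ S) : |r| ≤ max |sInf S| |sSup S| :=
  abs_le_max_abs_abs (csInf_le hb hr) (le_csSup ha hr)

lemma max_abs_csInf_abs_csSup_le {S : Set ℝ} {c : ℝ} (hc : 0 ≤ c) (h : ∀ r ∈ S, |r| ≤ c) :
    max |sInf S| |sSup S| ≤ c := by
  rcases S.eq_empty_or_nonempty with rfl | ⟨r, hr⟩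
  · simpa using hc
  have hlow : ∀ s ∈ S, -c ≤ s := fun s hs => (abs_le.mp (h s hs)).1
  have hup : ∀ s ∈ S, s ≤ c := fun s hs => (abs_le.mp (h s hs)).2
  refine max_le (abs_le.mpr ⟨le_csInf ⟨r, hr⟩ hlow, ?_⟩) (abs_le.mpr ⟨?_, csSup_le ⟨r, hr⟩ hup⟩)
  · exact (csInf_le ⟨-c, hlow⟩ hr).trans (hup r hr)
  · exact (hlow r hr).trans (le_csSup ⟨c, hup⟩ hr)

namespace RQH

variable {E : Type*} [NormedAddCommGroup E] [Module Quatᵐᵒᵖ E] [RQH E]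

lemma inn_add_left (φ ψ ω : E) : inn (φ + ψ) ω = inn φ ω + inn ψ ω := by
  rw [← conj_symm, add_right, star_add, conj_symm, conj_symm]

lemma inn_zero_left (ψ : E) : inn (0 : E) ψ = 0 :=
  map_zero (AddMonoidHom.mk' (inn · ψ) (inn_add_left · · ψ))

lemma inn_zero_right (φ : E) : inn φ (0 : E) = 0 :=
  map_zero (AddMonoidHom.mk' (inn φ) (add_right φ))

lemma inn_sub_left (φ ψ ω : E) : inn (φ - ψ) ω = inn φ ω - inn ψ ω :=
  map_sub (AddMonoidHom.mk' (inn · ω) (inn_add_left · · ω)) φ ψ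

lemma inn_sub_right (φ ψ ω : E) : inn φ (ψ - ω) = inn φ ψ - inn φ ω :=
  map_sub (AddMonoidHom.mk' (inn φ) (add_right φ)) ψ ω

lemma inn_neg_right (φ ψ : E) : inn φ (-ψ) = -inn φ ψ :=
  map_neg (AddMonoidHom.mk' (inn φ) (add_right φ)) ψ

lemma re_inn_comm (φ ψ : E) : (inn ψ φ).re = (inn φ ψ).re := by
  rw [← conj_symm φ ψ, Quaternion.re_star]

lemma re_inn_self (φ : E) : (inn φ φ).re = ‖φ‖ ^ 2 := by
  rw [norm_sq, Quaternion.re_coe]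

lemma re_inn_real_smul (t s : ℝ) (φ ψ : E) :
    (inn (op (t : Quat) • φ) (op (s : Quat) • ψ)).re = t * s * (inn φ ψ).re := by
  rw [smul_right, ← conj_symm, smul_right, star_mul, Quaternion.star_coe, conj_symm,
    Quaternion.mul_coe_eq_smul, Quaternion.coe_mul_eq_smul, Quaternion.re_smul,
    Quaternion.re_smul, smul_eq_mul, smul_eq_mul]
  ring

lemma norm_real_smul (t : ℝ) (φ : E) : ‖op (t : Quat) • φ‖ = |t| * ‖φ‖ := by
  have h : ‖op (t : Quat) • φ‖ ^ 2 = (|t| * ‖φ‖) ^ 2 := by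
    rw [← re_inn_self, re_inn_real_smul, re_inn_self, mul_pow, sq_abs]
    ring
  exact (sq_eq_sq₀ (norm_nonneg _) (by positivity)).mp h

lemma norm_inv_norm_smul {φ : E} (hφ : φ ≠ 0) : ‖op ((‖φ‖⁻¹ : ℝ) : Quat) • φ‖ = 1 := by
  rw [norm_real_smul, abs_inv, abs_norm, inv_mul_cancel₀ (norm_ne_zero_iff.mpr hφ)]

lemma norm_add_sq_add_norm_sub_sq (φ ψ : E) :
    ‖φ + ψ‖ ^ 2 + ‖φ - ψ‖ ^ 2 = 2 * (‖φ‖ ^ 2 + ‖ψ‖ ^ 2) := by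
  simp only [← re_inn_self, add_right, inn_add_left, inn_sub_right, inn_sub_left,
    Quaternion.re_add, Quaternion.re_sub]
  ring

lemma re_inn_le_norm_mul_norm (φ ψ : E) : (inn φ ψ).re ≤ ‖φ‖ * ‖ψ‖ := by
  -- `‖ ‖ψ‖ φ - ‖φ‖ ψ ‖² = 2 ‖φ‖ ‖ψ‖ (‖φ‖ ‖ψ‖ - Re ⟨φ, ψ⟩)`
  have h := sq_nonneg ‖op (‖ψ‖ : Quat) • φ - op (‖φ‖ : Quat) • ψ‖
  rw [← re_inn_self, inn_sub_left, inn_sub_right, inn_sub_right] at h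
  simp only [Quaternion.re_sub, re_inn_real_smul, re_inn_comm φ ψ] at h
  rw [re_inn_self, re_inn_self] at h
  rcases (mul_nonneg (norm_nonneg φ) (norm_nonneg ψ)).eq_or_lt with h0 | hpos
  · rcases mul_eq_zero.mp h0.symm with hφ | hψ
    · simp [norm_eq_zero.mp hφ, inn_zero_left, Quaternion.re_zero]
    · simp [norm_eq_zero.mp hψ, inn_zero_right, Quaternion.re_zero]
  · nlinarith

lemma abs_re_inn_le_norm_mul_norm (φ ψ : E) : |(inn φ ψ).re| ≤ ‖φ‖ * ‖ψ‖ := by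
  refine abs_le.mpr ⟨?_, re_inn_le_norm_mul_norm φ ψ⟩
  have h := re_inn_le_norm_mul_norm φ (-ψ)
  rw [inn_neg_right, Quaternion.re_neg, norm_neg] at h
  linarith

variable {A : E → E}

lemma re_inn_apply_polarization (hadd : ∀ x y, A (x + y) = A x + A y)
    (hsa : ∀ φ ψ, inn (A φ) ψ = inn φ (A ψ)) (x y : E) :
    4 * (inn (A x) y).re = (inn (A (x + y)) (x + y)).re - (inn (A (x - y)) (x - y)).re := by
  have hsub : A (x - y) = A x - A y := map_sub (AddMonoidHom.mk' A hadd) x y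
  have hsymm : (inn (A y) x).re = (inn (A x) y).re := by rw [hsa, re_inn_comm]
  rw [hadd, hsub]
  simp only [inn_add_left, add_right, inn_sub_left, inn_sub_right, Quaternion.re_add,
    Quaternion.re_sub]
  linarith

lemma two_mul_re_inn_apply_le (hadd : ∀ x y, A (x + y) = A x + A y)
    (hsa : ∀ φ ψ, inn (A φ) ψ = inn φ (A ψ)) {N : ℝ}
    (hN : ∀ z, |(inn (A z) z).re| ≤ N * ‖z‖ ^ 2) (x y : E) :
    2 * (inn (A x) y).re ≤ N * (‖x‖ ^ 2 + ‖y‖ ^ 2) := by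
  have hadd_le := (abs_le.mp (hN (x + y))).2
  have hsub_ge := (abs_le.mp (hN (x - y))).1
  have hpar : N * ‖x + y‖ ^ 2 + N * ‖x - y‖ ^ 2 = 2 * (N * (‖x‖ ^ 2 + ‖y‖ ^ 2)) := by
    rw [← mul_add, norm_add_sq_add_norm_sub_sq]
    ring
  linarith [re_inn_apply_polarization hadd hsa x y]

lemma abs_re_inn_apply_self_le (hsmul : ∀ (q : Quatᵐᵒᵖ) x, A (q • x) = q • A x) {N : ℝ}
    (hN : ∀ φ, ‖φ‖ = 1 → |(inn (A φ) φ).re| ≤ N) (z : E) :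
    |(inn (A z) z).re| ≤ N * ‖z‖ ^ 2 := by
  rcases eq_or_ne z 0 with rfl | hz
  · simp [inn_zero_right, Quaternion.re_zero]
  have hunit := hN _ (norm_inv_norm_smul hz)
  rw [hsmul, re_inn_real_smul, abs_mul, abs_mul, abs_inv, abs_norm] at hunit
  calc |(inn (A z) z).re| = ‖z‖ ^ 2 * (‖z‖⁻¹ * ‖z‖⁻¹ * |(inn (A z) z).re|) := by
        field_simp
    _ ≤ ‖z‖ ^ 2 * N := by gcongr
    _ = N * ‖z‖ ^ 2 := mul_comm _ _

lemma norm_apply_le_of_abs_re_inn_le (hadd : ∀ x y, A (x + y) = A x + A y)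
    (hsmul : ∀ (q : Quatᵐᵒᵖ) x, A (q • x) = q • A x)
    (hsa : ∀ φ ψ, inn (A φ) ψ = inn φ (A ψ)) {N : ℝ}
    (hN : ∀ φ, ‖φ‖ = 1 → |(inn (A φ) φ).re| ≤ N) {φ : E} (hφ : ‖φ‖ = 1) : ‖A φ‖ ≤ N := by
  rcases eq_or_ne (A φ) 0 with h0 | h0
  · rw [h0, norm_zero]
    exact (abs_nonneg _).trans (hN φ hφ)
  set ψ := op ((‖A φ‖⁻¹ : ℝ) : Quat) • A φ
  have hψ : ‖ψ‖ = 1 := norm_inv_norm_smul h0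
  have hre : (inn (A φ) ψ).re = ‖A φ‖ := by
    rw [smul_right, Quaternion.mul_coe_eq_smul, Quaternion.re_smul, re_inn_self, smul_eq_mul]
    field_simp
  have h := two_mul_re_inn_apply_le hadd hsa (abs_re_inn_apply_self_le hsmul hN) φ ψ
  rw [hre, hφ, hψ] at h
  linarith

end RQH

theorem stmt8_general (A : V → V) (hA : IsBddRL A) (hsa : IsSA A) :
    opN A = max |mA A| |MA A| := by
  obtain ⟨hadd, hsmul, C, hC⟩ := hA
  have hnum_le : ∀ φ : V, ‖φ‖ = 1 → |(inn (A φ) φ).re| ≤ ‖A φ‖ := fun φ hφ => by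
    simpa [hφ] using abs_re_inn_le_norm_mul_norm (A φ) φ
  have hnum_le_C : ∀ φ : V, ‖φ‖ = 1 → |(inn (A φ) φ).re| ≤ C := fun φ hφ =>
    (hnum_le φ hφ).trans (by simpa [hφ] using hC φ)
  have hbdd : Bornology.IsBounded {r | ∃ φ : V, ‖φ‖ = 1 ∧ r = (inn (A φ) φ).re} :=
    isBounded_iff_forall_norm_le.mpr ⟨C, fun _ ⟨φ, hφ, hr⟩ => hr ▸ hnum_le_C φ hφ⟩
  have hnorms : BddAbove {r | ∃ φ : V, ‖φ‖ = 1 ∧ r = ‖A φ‖} :=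
    ⟨C, fun _ ⟨φ, hφ, hr⟩ => hr ▸ by simpa [hφ] using hC φ⟩
  apply le_antisymm
  · refine Real.sSup_le (fun _ ⟨φ, hφ, hr⟩ => hr ▸ ?_) ((abs_nonneg _).trans (le_max_left _ _))
    exact RQH.norm_apply_le_of_abs_re_inn_le hadd hsmul hsa
      (fun ψ hψ => abs_le_max_abs_csInf_abs_csSup hbdd.bddBelow hbdd.bddAbove ⟨ψ, hψ, rfl⟩) hφ
  · refine max_abs_csInf_abs_csSup_le (Real.sSup_nonneg fun _ ⟨φ, _, hr⟩ => hr ▸ norm_nonneg _) ?_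
    rintro _ ⟨φ, hφ, rfl⟩
    exact (hnum_le φ hφ).trans (le_csSup hnorms ⟨φ, hφ, rfl⟩)

/-- ‖A‖ = max {|m(A)|, |M(A)|} for a bounded self-adjoint operator. -/
theorem stmt8 [Nontrivial V] (A : V → V) (hA : IsBddRL A) (hsa : IsSA A) :
    opN A = max |mA A| |MA A| :=
  stmt8_general A hA hsa
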